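/- Let A = (Σ, Q, I, F, δ) be a complete NBA. The relation P(⊑^{bw-di}, ⊏^{di-sim}), which compares source states of transitions by backward direct trace inclusion and target states by strict direct forward simulation, is good for pruning: L(Prune(A, P(⊑^{bw-di}, ⊏^{di-sim}))) = L(A). -/

import Mathlib

/-!
Let `π` be a fair initial run on `w`. For each `n`, among the initial runs on the first `n`
letters of `w` that are accepting wherever `π` is, take one whose sequence of simulation ranks is
colexicographically maximal. It uses no pruned transition: were its transition at position `i`
dominated by `(p', a, r')`, backward direct trace inclusion would reroute the prefix into `p'`
without losing accepting states, and forward simulation from `r'`, strictly above the state at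
`i + 1`, would carry the suffix along, raising the rank at `i + 1` and lowering none after it.
Kőnig's lemma then assembles these finite runs into a fair initial run of the pruned automaton.
-/

/-- A nondeterministic automaton (used both as NBA and NFA):
initial states, accepting states, and a transition relation. -/
structure NA (A : Type*) (Q : Type*) where
  ini : Set Q
  acc : Set Q
  trans : Set (Q × A × Q)

namespace NA

variable {A Q Q₁ Q₂ : Type*}

/-- Forward and backward completeness. -/
def Complete (M : NA A Q) : Prop :=
  ∀ (p : Q) (a : A), (∃ q, (q, a, p) ∈ M.trans) ∧ (∃ q, (p, a, q) ∈ M.trans)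

/-- Infinite run on an infinite word. -/
def InfRun (M : NA A Q) (w : ℕ → A) (π : ℕ → Q) : Prop :=
  ∀ i, (π i, w i, π (i + 1)) ∈ M.trans

/-- Fairness: accepting states are visited infinitely often. -/
def Fair (M : NA A Q) (π : ℕ → Q) : Prop :=
  ∀ n, ∃ m, n ≤ m ∧ π m ∈ M.acc

/-- The ω-language of a Büchi automaton. -/
def BuchiLang (M : NA A Q) : Set (ℕ → A) :=
  {w | ∃ π, π 0 ∈ M.ini ∧ M.InfRun w π ∧ M.Fair π}

/-- Finite run on a finite word (only the first `w.length + 1` values of `π` matter). -/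
def FinRun (M : NA A Q) (w : List A) (π : ℕ → Q) : Prop :=
  ∀ (i : ℕ) (h : i < w.length), (π i, w.get ⟨i, h⟩, π (i + 1)) ∈ M.trans

/-- The finite-word language of an NFA. -/
def FinLang (M : NA A Q) : Set (List A) :=
  {w | ∃ π, π 0 ∈ M.ini ∧ M.FinRun w π ∧ π w.length ∈ M.acc}

/-- Direct (forward) trace inclusion. -/
def DiTraceIncl (M : NA A Q₁) (N : NA A Q₂) (p : Q₁) (q : Q₂) : Prop :=
  ∀ (w : ℕ → A) (π : ℕ → Q₁), π 0 = p → M.InfRun w π →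
    ∃ ρ : ℕ → Q₂, ρ 0 = q ∧ N.InfRun w ρ ∧ ∀ i, π i ∈ M.acc → ρ i ∈ N.acc

/-- Fair trace inclusion. -/
def FairTraceIncl (M : NA A Q₁) (N : NA A Q₂) (p : Q₁) (q : Q₂) : Prop :=
  ∀ (w : ℕ → A) (π : ℕ → Q₁), π 0 = p → M.InfRun w π →
    ∃ ρ : ℕ → Q₂, ρ 0 = q ∧ N.InfRun w ρ ∧ (M.Fair π → N.Fair ρ)

/-- Backward direct trace inclusion. -/
def BwDiTraceIncl (M : NA A Q₁) (N : NA A Q₂) (p : Q₁) (q : Q₂) : Prop :=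
  ∀ (w : List A) (π : ℕ → Q₁), π 0 ∈ M.ini → M.FinRun w π → π w.length = p →
    ∃ ρ : ℕ → Q₂, ρ 0 ∈ N.ini ∧ N.FinRun w ρ ∧ ρ w.length = q ∧
      ∀ i, i ≤ w.length → π i ∈ M.acc → ρ i ∈ N.acc

/-- Forward finite trace inclusion. -/
def FwFinTraceIncl (M : NA A Q₁) (N : NA A Q₂) (p : Q₁) (q : Q₂) : Prop :=
  ∀ (w : List A) (π : ℕ → Q₁), π 0 = p → M.FinRun w π → π w.length ∈ M.acc →
    ∃ ρ : ℕ → Q₂, ρ 0 = q ∧ N.FinRun w ρ ∧ ρ w.length ∈ N.acc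

/-- Backward finite trace inclusion. -/
def BwFinTraceIncl (M : NA A Q₁) (N : NA A Q₂) (p : Q₁) (q : Q₂) : Prop :=
  ∀ (w : List A) (π : ℕ → Q₁), π 0 ∈ M.ini → M.FinRun w π → π w.length = p →
    ∃ ρ : ℕ → Q₂, ρ 0 ∈ N.ini ∧ N.FinRun w ρ ∧ ρ w.length = q

/-- Counting backward trace inclusion: the matching initial trace visits
accepting states at least as often. -/
def CountBwTraceIncl (M : NA A Q) (p q : Q) : Prop :=
  ∀ (w : List A) (π : ℕ → Q), π 0 ∈ M.ini → M.FinRun w π → π w.length = p →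
    ∃ ρ : ℕ → Q, ρ 0 ∈ M.ini ∧ M.FinRun w ρ ∧ ρ w.length = q ∧
      {i | i ≤ w.length ∧ π i ∈ M.acc}.ncard ≤ {i | i ≤ w.length ∧ ρ i ∈ M.acc}.ncard

/-- `R` is a direct forward simulation. -/
def IsDiSim (M : NA A Q₁) (N : NA A Q₂) (R : Q₁ → Q₂ → Prop) : Prop :=
  ∀ p q, R p q → (p ∈ M.acc → q ∈ N.acc) ∧
    ∀ a p', (p, a, p') ∈ M.trans → ∃ q', (q, a, q') ∈ N.trans ∧ R p' q'

/-- Direct forward simulation (the largest direct forward simulation). -/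
def DiSim (M : NA A Q₁) (N : NA A Q₂) (p : Q₁) (q : Q₂) : Prop :=
  ∃ R, IsDiSim M N R ∧ R p q

/-- `R` is a backward direct simulation (matching accepting and initial states). -/
def IsBwDiSim (M : NA A Q₁) (N : NA A Q₂) (R : Q₁ → Q₂ → Prop) : Prop :=
  ∀ p q, R p q → (p ∈ M.acc → q ∈ N.acc) ∧ (p ∈ M.ini → q ∈ N.ini) ∧
    ∀ a p', (p', a, p) ∈ M.trans → ∃ q', (q', a, q) ∈ N.trans ∧ R p' q'

/-- Backward direct simulation (the largest backward direct simulation). -/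
def BwDiSim (M : NA A Q₁) (N : NA A Q₂) (p : Q₁) (q : Q₂) : Prop :=
  ∃ R, IsBwDiSim M N R ∧ R p q

/-- `R` is a backward finite-word simulation (matching only initial states). -/
def IsBwSim (M : NA A Q₁) (N : NA A Q₂) (R : Q₁ → Q₂ → Prop) : Prop :=
  ∀ p q, R p q → (p ∈ M.ini → q ∈ N.ini) ∧
    ∀ a p', (p', a, p) ∈ M.trans → ∃ q', (q', a, q) ∈ N.trans ∧ R p' q'

/-- Backward finite-word simulation (the largest backward finite-word simulation). -/
def BwSim (M : NA A Q₁) (N : NA A Q₂) (p : Q₁) (q : Q₂) : Prop :=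
  ∃ R, IsBwSim M N R ∧ R p q

/-- Strict version of a relation: `x ⊏ y` iff `x ⊑ y` and not `y ⊑ x`. -/
def StrictRel (R : Q₁ → Q₁ → Prop) (x y : Q₁) : Prop := R x y ∧ ¬ R y x

/-- Comparing two transitions endpoint-wise; they must carry the same symbol. -/
def PairRel (Rb Rf : Q₁ → Q₂ → Prop) (t : Q₁ × A × Q₁) (t' : Q₂ × A × Q₂) : Prop :=
  t.2.1 = t'.2.1 ∧ Rb t.1 t'.1 ∧ Rf t.2.2 t'.2.2

/-- Pruned automaton: keep the transitions that are maximal w.r.t. `P`. -/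
def prune (M : NA A Q) (P : (Q × A × Q) → (Q × A × Q) → Prop) : NA A Q :=
  ⟨M.ini, M.acc, {t | t ∈ M.trans ∧ ¬ ∃ t' ∈ M.trans, P t t'}⟩

/-- Cross-pruned automaton: remove transitions of `M` subsumed by transitions of `N`. -/
def pruneAB (M : NA A Q₁) (N : NA A Q₂) (P : (Q₁ × A × Q₁) → (Q₂ × A × Q₂) → Prop) :
    NA A Q₁ :=
  ⟨M.ini, M.acc, {t | t ∈ M.trans ∧ ¬ ∃ t' ∈ N.trans, P t t'}⟩

/-- Saturated automaton: add every transition `S`-below an existing transition. -/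
def saturate (M : NA A Q) (S : (Q × A × Q) → (Q × A × Q) → Prop) : NA A Q :=
  ⟨M.ini, M.acc, {t | ∃ t' ∈ M.trans, S t t'}⟩

/-- A transition is transient if it occurs at most once in every trace. -/
def Transient (M : NA A Q) (t : Q × A × Q) : Prop :=
  ∀ (w : ℕ → A) (π : ℕ → Q), M.InfRun w π →
    ∀ i j, (π i, w i, π (i + 1)) = t → (π j, w j, π (j + 1)) = t → i = j

/-- Equivalence class of `q` w.r.t. the equivalence induced by the preorder `R`. -/
def cls (R : Q → Q → Prop) (q : Q) : Set Q := {x | R q x ∧ R x q}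

/-- Quotient automaton by the preorder `R`; equivalence classes are modeled as
the corresponding subsets of `Q`. -/
def quot (M : NA A Q) (R : Q → Q → Prop) : NA A (Set Q) :=
  ⟨{c | ∃ q ∈ M.ini, c = cls R q},
   {c | ∃ q ∈ M.acc, c = cls R q},
   {t | ∃ q₁ q₂, t.1 = cls R q₁ ∧ t.2.2 = cls R q₂ ∧ (q₁, t.2.1, q₂) ∈ M.trans}⟩

/-- `R`-jumping run: before each transition, jump to an `R`-larger state. -/
def JumpRun (M : NA A Q) (R : Q → Q → Prop) (w : ℕ → A) (π π' : ℕ → Q) : Prop :=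
  ∀ i, R (π i) (π' i) ∧ (π' i, w i, π (i + 1)) ∈ M.trans

/-- A jumping run is fair if it is accepting at infinitely many steps. -/
def JumpFair (M : NA A Q) (R : Q → Q → Prop) (π π' : ℕ → Q) : Prop :=
  ∀ n, ∃ m, n ≤ m ∧ ∃ q'' ∈ M.acc, R (π m) q'' ∧ R q'' (π' m)

end NA

open Finset in
theorem sum_range_mul_pow_lt {B j : ℕ} {f : ℕ → ℕ} (hf : ∀ k < j, f k < B) :
    ∑ k ∈ range j, f k * B ^ k < B ^ j := by
  induction j with
  | zero => simp
  | succ j ih =>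
    calc ∑ k ∈ range (j + 1), f k * B ^ k
        = ∑ k ∈ range j, f k * B ^ k + f j * B ^ j := sum_range_succ _ _
      _ < B ^ j + f j * B ^ j := by
          gcongr; exact ih fun k hk => hf k (by omega)
      _ = (f j + 1) * B ^ j := by ring
      _ ≤ B * B ^ j := by gcongr; exact hf j (by omega)
      _ = B ^ (j + 1) := by ring

open Finset in
theorem sum_range_mul_pow_lt_sum {B j n : ℕ} {f g : ℕ → ℕ} (hjn : j ≤ n)
    (hf : ∀ k < j, f k < B) (hj : f j < g j) (hle : ∀ k, j < k → k ≤ n → f k ≤ g k) :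
    ∑ k ∈ range (n + 1), f k * B ^ k < ∑ k ∈ range (n + 1), g k * B ^ k := by
  induction n, hjn using Nat.le_induction with
  | base =>
    rw [sum_range_succ, sum_range_succ]
    calc ∑ k ∈ range j, f k * B ^ k + f j * B ^ j
        < B ^ j + f j * B ^ j := by gcongr; exact sum_range_mul_pow_lt hf
      _ = (f j + 1) * B ^ j := by ring
      _ ≤ g j * B ^ j := by gcongr; exact hj
      _ ≤ ∑ k ∈ range j, g k * B ^ k + g j * B ^ j := Nat.le_add_left _ _
  | succ n hjn ih =>
    rw [sum_range_succ (fun k => f k * B ^ k), sum_range_succ (fun k => g k * B ^ k)]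
    exact Nat.add_lt_add_of_lt_of_le (ih fun k hjk hkn => hle k hjk (by omega))
      (Nat.mul_le_mul_right _ (hle (n + 1) (by omega) le_rfl))

/-- Kőnig's lemma, via compactness of `ℕ → Q` for discrete finite `Q`. -/
theorem exists_forall_of_antitone_of_local {Q : Type*} [Finite Q] (P : ℕ → (ℕ → Q) → Prop)
    (hsucc : ∀ n ρ, P (n + 1) ρ → P n ρ)
    (hlocal : ∀ n ρ ρ', (∀ i ≤ n, ρ i = ρ' i) → P n ρ → P n ρ')
    (hne : ∀ n, ∃ ρ, P n ρ) : ∃ ρ, ∀ n, P n ρ := by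
  let _ : TopologicalSpace Q := ⊥
  have : DiscreteTopology Q := ⟨rfl⟩
  have hclosed : ∀ n, IsClosed {ρ | P n ρ} := by
    intro n
    let restrict : (ℕ → Q) → (Fin (n + 1) → Q) := fun ρ i => ρ i
    have hrestrict : Continuous restrict := continuous_pi fun i => continuous_apply _
    convert (isClosed_discrete (restrict '' {ρ | P n ρ})).preimage hrestrict using 1
    ext ρ
    refine ⟨fun h => ⟨ρ, h, rfl⟩, ?_⟩
    rintro ⟨ρ', hρ', heq⟩
    exact hlocal n ρ' ρ (fun i hi => congrFun heq ⟨i, by omega⟩) hρ'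
  obtain ⟨ρ, hρ⟩ := IsCompact.nonempty_iInter_of_sequence_nonempty_isCompact_isClosed
    (fun n => {ρ | P n ρ}) (fun n ρ => hsucc n ρ) hne (hclosed 0).isCompact hclosed
  exact ⟨ρ, Set.mem_iInter.mp hρ⟩

namespace NA

variable {A Q Q₁ Q₂ : Type*}

section Simulation

theorem isDiSim_diSim (M : NA A Q₁) (N : NA A Q₂) : IsDiSim M N (DiSim M N) := by
  rintro p q ⟨R, hR, hpq⟩
  obtain ⟨hacc, hstep⟩ := hR p q hpq
  refine ⟨hacc, fun a p' ht => ?_⟩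
  obtain ⟨q', hq', hR'⟩ := hstep a p' ht
  exact ⟨q', hq', R, hR, hR'⟩

variable (M : NA A Q)

theorem diSim_refl (p : Q) : M.DiSim M p p :=
  ⟨Eq, fun _ _ h => h ▸ ⟨id, fun _ p' ht => ⟨p', ht, rfl⟩⟩, rfl⟩

variable {M}

theorem DiSim.trans {p q r : Q} (hpq : M.DiSim M p q) (hqr : M.DiSim M q r) :
    M.DiSim M p r := by
  refine ⟨fun x z => ∃ y, M.DiSim M x y ∧ M.DiSim M y z, ?_, q, hpq, hqr⟩
  rintro x z ⟨y, hxy, hyz⟩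
  obtain ⟨hacc₁, hstep₁⟩ := isDiSim_diSim M M x y hxy
  obtain ⟨hacc₂, hstep₂⟩ := isDiSim_diSim M M y z hyz
  refine ⟨hacc₂ ∘ hacc₁, fun a x' ht => ?_⟩
  obtain ⟨y', hty, hxy'⟩ := hstep₁ a x' ht
  obtain ⟨z', htz, hyz'⟩ := hstep₂ a y' hty
  exact ⟨z', htz, y', hxy', hyz'⟩

theorem exists_run_diSim {N : NA A Q₂} {w : ℕ → A} {π : ℕ → Q} {m n : ℕ} (hmn : m ≤ n)
    (hπ : ∀ k, m ≤ k → k < n → (π k, w k, π (k + 1)) ∈ M.trans) {q : Q₂}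
    (hq : M.DiSim N (π m) q) :
    ∃ ρ : ℕ → Q₂, ρ m = q ∧ (∀ k, m ≤ k → k < n → (ρ k, w k, ρ (k + 1)) ∈ N.trans) ∧
      ∀ k, m ≤ k → k ≤ n → M.DiSim N (π k) (ρ k) := by
  induction n, hmn using Nat.le_induction with
  | base => exact ⟨fun _ => q, rfl, by omega, fun k hmk hkm => by rwa [le_antisymm hkm hmk]⟩
  | succ n hmn ih =>
    obtain ⟨ρ, hρm, hρ, hsim⟩ := ih fun k hmk hkn => hπ k hmk (by omega)
    obtain ⟨q', hq', hsim'⟩ :=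
      (isDiSim_diSim M N _ _ (hsim n hmn le_rfl)).2 (w n) (π (n + 1)) (hπ n hmn (by omega))
    refine ⟨Function.update ρ (n + 1) q', by simp [hρm, show m ≠ n + 1 by omega], ?_, ?_⟩
    · intro k hmk hkn
      rcases Nat.lt_succ_iff_lt_or_eq.mp hkn with hkn | rfl
      · rw [Function.update_of_ne (by omega), Function.update_of_ne (by omega)]
        exact hρ k hmk hkn
      · simpa using hq'
    · intro k hmk hkn
      rcases Nat.lt_succ_iff_lt_or_eq.mp (Nat.lt_succ_of_le hkn) with hkn | rfl
      · simpa [show k ≠ n + 1 by omega] using hsim k hmk (by omega)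
      · simpa using hsim'

end Simulation

section Rank

variable (M : NA A Q)

noncomputable def simRank (q : Q) : ℕ := {x | M.DiSim M x q}.ncard

variable [Finite Q]

theorem simRank_lt_card_succ (q : Q) : M.simRank q < Nat.card Q + 1 :=
  Nat.lt_succ_of_le (Set.ncard_le_card _)

variable {M}

theorem simRank_mono {p q : Q} (h : M.DiSim M p q) : M.simRank p ≤ M.simRank q :=
  Set.ncard_le_ncard (fun _ hx => DiSim.trans hx h) (Set.toFinite _)

theorem simRank_lt_of_strictRel {p q : Q} (h : StrictRel (M.DiSim M) p q) :
    M.simRank p < M.simRank q :=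
  Set.ncard_lt_ncard ⟨fun _ hx => DiSim.trans hx h.1, fun hsub => h.2 (hsub (diSim_refl M q))⟩
    (Set.toFinite _)

end Rank

theorem finRun_ofFn_iff {M : NA A Q} {w : ℕ → A} {ρ : ℕ → Q} {i : ℕ} :
    M.FinRun (List.ofFn fun k : Fin i => w k) ρ ↔
      ∀ k < i, (ρ k, w k, ρ (k + 1)) ∈ M.trans := by
  simp [FinRun]

theorem BwDiTraceIncl.exists_prefixRun {M : NA A Q₁} {N : NA A Q₂} {p : Q₁} {q : Q₂}
    (h : M.BwDiTraceIncl N p q) {w : ℕ → A} {ρ : ℕ → Q₁} {i : ℕ} (h0 : ρ 0 ∈ M.ini)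
    (hρ : ∀ k < i, (ρ k, w k, ρ (k + 1)) ∈ M.trans) (hi : ρ i = p) :
    ∃ σ : ℕ → Q₂, σ 0 ∈ N.ini ∧ (∀ k < i, (σ k, w k, σ (k + 1)) ∈ N.trans) ∧ σ i = q ∧
      ∀ k ≤ i, ρ k ∈ M.acc → σ k ∈ N.acc := by
  have hlen : (List.ofFn fun k : Fin i => w k).length = i := List.length_ofFn
  obtain ⟨σ, hσ0, hσ, hσi, hacc⟩ := h _ ρ h0 (finRun_ofFn_iff.mpr hρ) (by rw [hlen, hi])
  rw [hlen] at hσi hacc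
  exact ⟨σ, hσ0, finRun_ofFn_iff.mp hσ, hσi, hacc⟩

theorem piecewise_Iic_mem_trans {M : NA A Q} {w : ℕ → A} {σ τ : ℕ → Q} {i n : ℕ}
    (hσ : ∀ k < i, (σ k, w k, σ (k + 1)) ∈ M.trans) (hmid : (σ i, w i, τ (i + 1)) ∈ M.trans)
    (hτ : ∀ k, i + 1 ≤ k → k < n → (τ k, w k, τ (k + 1)) ∈ M.trans) :
    ∀ k < n, ((Set.Iic i).piecewise σ τ k, w k, (Set.Iic i).piecewise σ τ (k + 1)) ∈ M.trans := by
  intro k hk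
  rcases lt_trichotomy k i with hki | rfl | hik
  · rw [Set.piecewise_eq_of_mem _ _ _ (Set.mem_Iic.2 hki.le),
      Set.piecewise_eq_of_mem _ _ _ (Set.mem_Iic.2 hki)]
    exact hσ k hki
  · rw [Set.piecewise_eq_of_mem _ _ _ (Set.mem_Iic.2 le_rfl),
      Set.piecewise_eq_of_notMem _ _ _ (by rw [Set.mem_Iic]; omega)]
    exact hmid
  · rw [Set.piecewise_eq_of_notMem _ _ _ (by rw [Set.mem_Iic]; omega),
      Set.piecewise_eq_of_notMem _ _ _ (by rw [Set.mem_Iic]; omega)]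
    exact hτ k hik hk

def IsDominatingPrefixRun (M : NA A Q) (w : ℕ → A) (π : ℕ → Q) (n : ℕ) (ρ : ℕ → Q) : Prop :=
  ρ 0 ∈ M.ini ∧ (∀ i < n, (ρ i, w i, ρ (i + 1)) ∈ M.trans) ∧ ∀ i ≤ n, π i ∈ M.acc → ρ i ∈ M.acc

theorem IsDominatingPrefixRun.mono {M : NA A Q} {w : ℕ → A} {π ρ : ℕ → Q} {m n : ℕ}
    (h : M.IsDominatingPrefixRun w π n ρ) (hmn : m ≤ n) : M.IsDominatingPrefixRun w π m ρ :=
  ⟨h.1, fun i hi => h.2.1 i (by omega), fun i hi => h.2.2 i (by omega)⟩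

theorem IsDominatingPrefixRun.congr {M : NA A Q} {w : ℕ → A} {π ρ ρ' : ℕ → Q} {n : ℕ}
    (h : M.IsDominatingPrefixRun w π n ρ) (heq : ∀ i ≤ n, ρ i = ρ' i) :
    M.IsDominatingPrefixRun w π n ρ' := by
  refine ⟨heq 0 (Nat.zero_le n) ▸ h.1, fun i hi => ?_, fun i hi => heq i hi ▸ h.2.2 i hi⟩
  rw [← heq i hi.le, ← heq (i + 1) hi]
  exact h.2.1 i hi

section Weight

/-- The ranks are digits in base `Nat.card Q + 1`, so raising the rank at one position outweighs
any change at earlier positions. -/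
noncomputable def simWeight (M : NA A Q) (n : ℕ) (ρ : ℕ → Q) : ℕ :=
  ∑ k ∈ Finset.range (n + 1), M.simRank (ρ k) * (Nat.card Q + 1) ^ k

variable [Finite Q] {M : NA A Q}

theorem IsDominatingPrefixRun.exists_simWeight_lt {w : ℕ → A} {π ρ : ℕ → Q} {n i : ℕ}
    (hρ : M.IsDominatingPrefixRun w π n ρ) (hi : i < n) {t' : Q × A × Q} (ht' : t' ∈ M.trans)
    (hP : PairRel (M.BwDiTraceIncl M) (StrictRel (M.DiSim M)) (ρ i, w i, ρ (i + 1)) t') :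
    ∃ ρ', M.IsDominatingPrefixRun w π n ρ' ∧ M.simWeight n ρ < M.simWeight n ρ' := by
  obtain ⟨p', a, r'⟩ := t'
  obtain ⟨ha : w i = a, hbw, hsim⟩ := hP
  obtain ⟨σ, hσ0, hσ, hσi, hσacc⟩ :=
    hbw.exists_prefixRun hρ.1 (fun k hk => hρ.2.1 k (by omega)) rfl
  obtain ⟨τ, hτi, hτ, hτsim⟩ :=
    exists_run_diSim (π := ρ) (Nat.succ_le_of_lt hi) (fun k _ hk => hρ.2.1 k hk) hsim.1
  have hmid : (σ i, w i, τ (i + 1)) ∈ M.trans := by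
    rwa [hσi, hτi, ha]
  refine ⟨(Set.Iic i).piecewise σ τ, ⟨?_, piecewise_Iic_mem_trans hσ hmid hτ, ?_⟩, ?_⟩
  · rwa [Set.piecewise_eq_of_mem _ _ _ (Set.mem_Iic.2 (Nat.zero_le i))]
  · intro k hk hacc
    by_cases hki : k ≤ i
    · rw [Set.piecewise_eq_of_mem _ _ _ (Set.mem_Iic.2 hki)]
      exact hσacc k hki (hρ.2.2 k hk hacc)
    · rw [Set.piecewise_eq_of_notMem _ _ _ (by rw [Set.mem_Iic]; omega)]
      exact (isDiSim_diSim M M _ _ (hτsim k (by omega) hk)).1 (hρ.2.2 k hk hacc)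
  · refine sum_range_mul_pow_lt_sum (j := i + 1) hi (fun k _ => M.simRank_lt_card_succ _) ?_ ?_
    · rw [Set.piecewise_eq_of_notMem _ _ _ (by rw [Set.mem_Iic]; omega), hτi]
      exact simRank_lt_of_strictRel hsim
    · intro k hik hkn
      rw [Set.piecewise_eq_of_notMem _ _ _ (by rw [Set.mem_Iic]; omega)]
      exact simRank_mono (hτsim k hik.le hkn)

theorem exists_isDominatingPrefixRun_prune {w : ℕ → A} {π : ℕ → Q} (h0 : π 0 ∈ M.ini)
    (hπ : M.InfRun w π) (n : ℕ) :
    ∃ ρ, (M.prune (PairRel (M.BwDiTraceIncl M) (StrictRel (M.DiSim M)))).IsDominatingPrefixRun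
      w π n ρ := by
  have hne : {ρ | M.IsDominatingPrefixRun w π n ρ}.Nonempty :=
    ⟨π, h0, fun i _ => hπ i, fun _ _ h => h⟩
  have hbdd : BddAbove (M.simWeight n '' {ρ | M.IsDominatingPrefixRun w π n ρ}) :=
    ⟨_, Set.forall_mem_image.2 fun ρ _ =>
      (sum_range_mul_pow_lt fun k _ => M.simRank_lt_card_succ (ρ k)).le⟩
  obtain ⟨_, ⟨ρ, hρ, rfl⟩, hmax⟩ := hbdd.exists_isGreatest_of_nonempty (hne.image _)
  refine ⟨ρ, hρ.1, fun i hi => ⟨hρ.2.1 i hi, ?_⟩, hρ.2.2⟩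
  rintro ⟨t', ht', hP⟩
  obtain ⟨ρ', hρ', hlt⟩ := hρ.exists_simWeight_lt hi ht' hP
  exact (hmax ⟨ρ', hρ', rfl⟩).not_gt hlt

end Weight

theorem buchiLang_prune_subset (M : NA A Q) (P : Q × A × Q → Q × A × Q → Prop) :
    (M.prune P).BuchiLang ⊆ M.BuchiLang :=
  fun _ ⟨π, h0, hπ, hfair⟩ => ⟨π, h0, fun i => (hπ i).1, hfair⟩

end NA

theorem prune_bwDiTraceIncl_strictDiSim_gfp_general
    {A Q : Type*} [Fintype Q] (M : NA A Q) :
    (M.prune (NA.PairRel (M.BwDiTraceIncl M) (NA.StrictRel (M.DiSim M)))).BuchiLang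
      = M.BuchiLang := by
  refine (NA.buchiLang_prune_subset M _).antisymm ?_
  rintro w ⟨π, h0, hπ, hfair⟩
  obtain ⟨ρ, hρ⟩ := exists_forall_of_antitone_of_local
    (fun n ρ => (M.prune _).IsDominatingPrefixRun w π n ρ)
    (fun _ _ h => h.mono (Nat.le_succ _)) (fun _ _ _ heq h => h.congr heq)
    (NA.exists_isDominatingPrefixRun_prune h0 hπ)
  refine ⟨ρ, (hρ 0).1, fun i => (hρ (i + 1)).2.1 i i.lt_succ_self, fun n => ?_⟩
  obtain ⟨m, hnm, hacc⟩ := hfair n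
  exact ⟨m, hnm, (hρ m).2.2 m le_rfl hacc⟩

/-- `P(⊑ᵇʷ⁻ᵈⁱ, ⊏ᵈⁱ⁻ˢⁱᵐ)` (backward direct trace inclusion on
sources, strict direct forward simulation on targets) is good for pruning on
complete NBAs. -/
theorem prune_bwDiTraceIncl_strictDiSim_gfp
    {A Q : Type*} [Fintype A] [Fintype Q] (M : NA A Q) (hM : M.Complete) :
    (M.prune (NA.PairRel (M.BwDiTraceIncl M) (NA.StrictRel (M.DiSim M)))).BuchiLang
      = M.BuchiLang :=
  prune_bwDiTraceIncl_strictDiSim_gfp_general M
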